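/- arXiv:2505.11403 — 2 statements merged into one kernel-verified Lean document; each statement's English description precedes it below -/
import Mathlib

section
/- If Y_0 Y_0^(δ) Y_0^(δ²) is a strongly (3, δ)-repetition, then its image under ψ, namely ψ(Y_0) ψ(Y_0^(δ)) ψ(Y_0^(δ²)), is also a strongly (3, δ)-repetition, provided δ = σ^j where ψ(a) = a σ(a). -/
def twist {A : Type*} (δ : Equiv.Perm A) (w : List A) : List A := w.map δ

def psi {A : Type*} (σ : Equiv.Perm A) (w : List A) : List A :=
  w.flatMap (fun a => [a, σ a])

/-! Since `ψ` is a morphism, the image of `Y₀ Y₀^(δ) Y₀^(δ²)` is `ψ(Y₀) ψ(Y₀^(δ)) ψ(Y₀^(δ²))`,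
and since `δ = σ^j` commutes with `σ`, `ψ(w^(δ)) = ψ(w)^(δ)`; so `Z = ψ(Y₀)` works. -/

section

variable {A : Type*}

theorem psi_append (σ : Equiv.Perm A) (u v : List A) :
    psi σ (u ++ v) = psi σ u ++ psi σ v :=
  List.flatMap_append ..

theorem psi_ne_nil (σ : Equiv.Perm A) {w : List A} (hw : w ≠ []) : psi σ w ≠ [] := by
  obtain ⟨a, t, rfl⟩ := List.exists_cons_of_ne_nil hw
  simp [psi]

theorem psi_twist_of_commute {σ δ : Equiv.Perm A} (h : Commute δ σ) (w : List A) :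
    psi σ (twist δ w) = twist δ (psi σ w) := by
  have hδσ : ∀ a, σ (δ a) = δ (σ a) := DFunLike.congr_fun h.eq.symm
  simp only [psi, twist, List.flatMap_map, List.map_flatMap, List.map_cons, List.map_nil, hδσ]

end

theorem psi_image_strong_rep_general {A : Type*} (σ : Equiv.Perm A) (j : ℕ)
    (δ : Equiv.Perm A) (hδ : δ = σ ^ j) (Y₀ : List A) (hY : Y₀ ≠ []) :
    ∃ Z : List A, Z ≠ [] ∧
      psi σ (Y₀ ++ twist δ Y₀ ++ twist (δ ^ 2) Y₀) =
        Z ++ twist δ Z ++ twist (δ ^ 2) Z := by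
  have hcomm : Commute δ σ := hδ ▸ Commute.pow_left (Commute.refl σ) j
  refine ⟨psi σ Y₀, psi_ne_nil σ hY, ?_⟩
  rw [psi_append, psi_append, psi_twist_of_commute hcomm,
    psi_twist_of_commute (hcomm.pow_left 2)]

/-- if Y₀ Y₀^(δ) Y₀^(δ²) is a strongly (3, δ)-repetition (Y₀ nonempty)
    and δ = σ^j, then its ψ-image is again a strongly (3, δ)-repetition
    Z Z^(δ) Z^(δ²) with Z nonempty (namely Z = ψ(Y₀)). -/
theorem psi_image_strong_rep {A : Type*} [Fintype A] (σ : Equiv.Perm A) (j : ℕ)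
    (δ : Equiv.Perm A) (hδ : δ = σ ^ j) (Y₀ : List A) (hY : Y₀ ≠ []) :
    ∃ Z : List A, Z ≠ [] ∧
      psi σ (Y₀ ++ twist δ Y₀ ++ twist (δ ^ 2) Y₀) =
        Z ++ twist δ Z ++ twist (δ ^ 2) Z :=
  psi_image_strong_rep_general σ j δ hδ Y₀ hY
end

section
/- Let A be an alphabet of size N ≥ 3, σ a cyclic permutation of A, and δ = σ^j with 1 ≤ j < N and j ≢ 1 (mod N). Then the infinite word W = lim_n ψ^n(a_0), where ψ(a) = a σ(a), is strongly (3, δ)-free: no factor of W has the form X X^(δ) X^(δ²) with X nonempty. -/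
/-- The infinite fixed point W = lim_n ψ^n(a₀). -/
def Wfix {A : Type*} (σ : Equiv.Perm A) (a₀ : A) (n : ℕ) : A :=
  ((psi σ)^[n + 1] [a₀]).getD n a₀

/-- A finite word u is a factor of an infinite word W if it occurs in W at some position. -/
def IsFactorOf {A : Type*} (u : List A) (W : ℕ → A) : Prop :=
  ∃ i : ℕ, u = (List.range u.length).map (fun k => W (i + k))

open Equiv

section TwistedPeriod

variable {A : Type*} {σ δ : Perm A} {f : ℕ → A}

def TwistedPeriodOn (f : ℕ → A) (δ : Perm A) (i m : ℕ) : Prop :=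
  ∀ k < 2 * m, f (i + m + k) = δ (f (i + k))

theorem not_twistedPeriodOn_one (hf0 : ∀ n, f (2 * n) = f n)
    (hf1 : ∀ n, f (2 * n + 1) = σ (f n)) (hδ : ∀ x, δ x ≠ σ x) (i : ℕ) :
    ¬ TwistedPeriodOn f δ i 1 := by
  intro h
  rcases Nat.even_or_odd' i with ⟨t, rfl | rfl⟩
  · have h0 := h 0 (by omega)
    rw [add_zero, add_zero, hf1, hf0] at h0
    exact hδ _ h0.symm
  · have h1 := h 1 (by omega)
    rw [show 2 * t + 1 + 1 + 1 = 2 * (t + 1) + 1 by ring,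
      show 2 * t + 1 + 1 = 2 * (t + 1) by ring, hf1, hf0] at h1
    exact hδ _ h1.symm

theorem TwistedPeriodOn.half (hf0 : ∀ n, f (2 * n) = f n) {i m : ℕ}
    (h : TwistedPeriodOn f δ i (2 * m)) : TwistedPeriodOn f δ ((i + 1) / 2) m := by
  intro k hk
  have hk' := h (2 * ((i + 1) / 2 + k) - i) (by omega)
  rwa [show i + 2 * m + (2 * ((i + 1) / 2 + k) - i) = 2 * ((i + 1) / 2 + m + k) by omega,
    show i + (2 * ((i + 1) / 2 + k) - i) = 2 * ((i + 1) / 2 + k) by omega, hf0, hf0] at hk'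

theorem apply_succ_ne_sq_apply (hf0 : ∀ n, f (2 * n) = f n)
    (hf1 : ∀ n, f (2 * n + 1) = σ (f n)) (hσ : ∀ x, σ x ≠ x) {n : ℕ} (hn : Even n) :
    f (n + 1) ≠ σ (σ (f n)) := by
  obtain ⟨u, rfl⟩ := hn
  rw [← two_mul, hf1, hf0]
  exact fun h => hσ _ (σ.injective h).symm

/-- For odd `m = 2p + 1` the two halves of the window give `σ (f (t + p)) = δ (f t)` and
`f (t + p + 1) = δ (σ (f t))`, whence `f (t + p + 1) = σ² (f (t + p))`. -/
theorem TwistedPeriodOn.apply_succ_eq_sq_apply (hf0 : ∀ n, f (2 * n) = f n)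
    (hf1 : ∀ n, f (2 * n + 1) = σ (f n)) (hcomm : Commute σ δ) {i p t : ℕ}
    (h : TwistedPeriodOn f δ i (2 * p + 1)) (hit : i ≤ 2 * t)
    (hti : 2 * t + 2 < i + 2 * (2 * p + 1)) :
    f (t + p + 1) = σ (σ (f (t + p))) := by
  have hev := h (2 * t - i) (by omega)
  have hodd := h (2 * t + 1 - i) (by omega)
  rw [show i + (2 * p + 1) + (2 * t - i) = 2 * (t + p) + 1 by omega,
    show i + (2 * t - i) = 2 * t by omega, hf1, hf0] at hev
  rw [show i + (2 * p + 1) + (2 * t + 1 - i) = 2 * (t + p + 1) by omega,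
    show i + (2 * t + 1 - i) = 2 * t + 1 by omega, hf0, hf1] at hodd
  rw [hodd, hev, ← Perm.mul_apply, ← hcomm.eq, Perm.mul_apply]

theorem not_twistedPeriodOn_two_mul_add_one (hf0 : ∀ n, f (2 * n) = f n)
    (hf1 : ∀ n, f (2 * n + 1) = σ (f n)) (hcomm : Commute σ δ) (hσ : ∀ x, σ x ≠ x)
    {p : ℕ} (hp : 1 ≤ p) (i : ℕ) : ¬ TwistedPeriodOn f δ i (2 * p + 1) := by
  intro h
  have step := fun t => h.apply_succ_eq_sq_apply hf0 hf1 hcomm (t := t)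
  by_cases hev : Even ((i + 1) / 2 + p)
  · exact apply_succ_ne_sq_apply hf0 hf1 hσ hev (step _ (by omega) (by omega))
  · refine apply_succ_ne_sq_apply hf0 hf1 hσ (Nat.even_add_one.mpr hev) ?_
    have := step ((i + 1) / 2 + 1) (by omega) (by omega)
    rwa [add_right_comm _ 1 p] at this

theorem not_twistedPeriodOn (hf0 : ∀ n, f (2 * n) = f n)
    (hf1 : ∀ n, f (2 * n + 1) = σ (f n)) (hcomm : Commute σ δ) (hσ : ∀ x, σ x ≠ x)
    (hδ : ∀ x, δ x ≠ σ x) {m : ℕ} (hm : 1 ≤ m) (i : ℕ) : ¬ TwistedPeriodOn f δ i m := by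
  induction m using Nat.strong_induction_on generalizing i with
  | _ m ih =>
    rcases Nat.even_or_odd' m with ⟨p, rfl | rfl⟩
    · exact fun h => ih p (by omega) (by omega) _ (h.half hf0)
    · rcases Nat.eq_zero_or_pos p with rfl | hp
      · exact not_twistedPeriodOn_one hf0 hf1 hδ i
      · exact not_twistedPeriodOn_two_mul_add_one hf0 hf1 hcomm hσ hp i

end TwistedPeriod

theorem digits_two_sum_two_mul (n : ℕ) : (Nat.digits 2 (2 * n)).sum = (Nat.digits 2 n).sum := by
  rcases Nat.eq_zero_or_pos n with rfl | hn
  · rfl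
  · rw [← zero_add (2 * n), Nat.digits_add 2 one_lt_two 0 n two_pos (Or.inr hn.ne'),
      List.sum_cons, zero_add]

theorem digits_two_sum_two_mul_add_one (n : ℕ) :
    (Nat.digits 2 (2 * n + 1)).sum = (Nat.digits 2 n).sum + 1 := by
  rw [add_comm, Nat.digits_add 2 one_lt_two 1 n one_lt_two (Or.inl one_ne_zero), List.sum_cons,
    add_comm]

section Psi

variable {A : Type*} (σ : Perm A)

theorem psi_getElem?_two_mul (l : List A) (t : ℕ) : (psi σ l)[2 * t]? = l[t]? := by
  induction l generalizing t with
  | nil => simp [psi]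
  | cons a l ih =>
    cases t with
    | zero => rfl
    | succ t => simpa [psi, Nat.mul_succ] using ih t

theorem psi_getElem?_two_mul_add_one (l : List A) (t : ℕ) :
    (psi σ l)[2 * t + 1]? = l[t]?.map σ := by
  induction l generalizing t with
  | nil => simp [psi]
  | cons a l ih =>
    cases t with
    | zero => rfl
    | succ t => simpa [psi, Nat.mul_succ] using ih t

theorem psi_iterate_getElem? (a₀ : A) {m k : ℕ} (hk : k < 2 ^ m) :
    ((psi σ)^[m] [a₀])[k]? = some ((σ ^ (Nat.digits 2 k).sum) a₀) := by
  induction m generalizing k with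
  | zero =>
    obtain rfl : k = 0 := by omega
    rfl
  | succ m ih =>
    rw [Function.iterate_succ_apply']
    rcases Nat.even_or_odd' k with ⟨t, rfl | rfl⟩
    · rw [psi_getElem?_two_mul, ih (by omega), digits_two_sum_two_mul]
    · rw [psi_getElem?_two_mul_add_one, ih (by omega), digits_two_sum_two_mul_add_one, pow_succ',
        Perm.mul_apply, Option.map_some]

theorem Wfix_eq_pow_apply (a₀ : A) (n : ℕ) : Wfix σ a₀ n = (σ ^ (Nat.digits 2 n).sum) a₀ := by
  rw [Wfix, List.getD_eq_getElem?_getD,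
    psi_iterate_getElem? σ a₀ (n.lt_two_pow_self.trans (Nat.pow_lt_pow_succ one_lt_two)),
    Option.getD_some]

theorem Wfix_two_mul (a₀ : A) (n : ℕ) : Wfix σ a₀ (2 * n) = Wfix σ a₀ n := by
  rw [Wfix_eq_pow_apply, Wfix_eq_pow_apply, digits_two_sum_two_mul]

theorem Wfix_two_mul_add_one (a₀ : A) (n : ℕ) : Wfix σ a₀ (2 * n + 1) = σ (Wfix σ a₀ n) := by
  rw [Wfix_eq_pow_apply, Wfix_eq_pow_apply, digits_two_sum_two_mul_add_one, pow_succ',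
    Perm.mul_apply]

end Psi

section Factor

variable {A : Type*}

theorem IsFactorOf.exists_getElem? {u : List A} {W : ℕ → A} (h : IsFactorOf u W) :
    ∃ i, ∀ k < u.length, u[k]? = some (W (i + k)) := by
  obtain ⟨i, hi⟩ := h
  refine ⟨i, fun k hk => ?_⟩
  rw [hi]
  simp [hk]

theorem twist_cube_getElem?_length_add (δ : Perm A) (X : List A) {k : ℕ}
    (hk : k < 2 * X.length) :
    (X ++ twist δ X ++ twist (δ ^ 2) X)[X.length + k]? =
      (X ++ twist δ X ++ twist (δ ^ 2) X)[k]?.map δ := by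
  have hcube : X ++ twist δ X ++ twist (δ ^ 2) X = X ++ twist δ (X ++ twist δ X) := by
    simp [twist, sq, Perm.coe_mul]
  have hlen : k < (X ++ twist δ X).length := by simp [twist]; omega
  rw [List.getElem?_append_left hlen, hcube, List.getElem?_append_right (by omega),
    Nat.add_sub_cancel_left, twist, List.getElem?_map]

theorem IsFactorOf.twistedPeriodOn {δ : Perm A} {X : List A} {W : ℕ → A}
    (h : IsFactorOf (X ++ twist δ X ++ twist (δ ^ 2) X) W) :
    ∃ i, TwistedPeriodOn W δ i X.length := by
  obtain ⟨i, hi⟩ := h.exists_getElem?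
  have hlen : (X ++ twist δ X ++ twist (δ ^ 2) X).length = 3 * X.length := by
    simp [twist]; ring
  refine ⟨i, fun k hk => ?_⟩
  have := twist_cube_getElem?_length_add δ X hk
  rw [hi _ (by omega), hi _ (by omega), Option.map_some, Option.some_inj, ← add_assoc] at this
  exact this

end Factor

theorem Equiv.Perm.modEq_of_pow_apply_eq {A : Type*} {σ : Perm A} {x : A} {N : ℕ}
    (hσ : ∀ k : ℕ, (σ ^ k) x = x ↔ N ∣ k) {a b : ℕ} (h : (σ ^ a) x = (σ ^ b) x) :
    a ≡ b [MOD N] := by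
  wlog hba : b ≤ a generalizing a b
  · exact (this h.symm (by omega)).symm
  refine ((Nat.modEq_iff_dvd' hba).2 ((hσ _).1 ((σ ^ b).injective ?_))).symm
  rwa [← Perm.mul_apply, ← pow_add, Nat.add_sub_cancel' hba]

theorem strongly_three_delta_free_general {A : Type*} (N : ℕ) (σ : Equiv.Perm A)
    (hσ : ∀ (a : A) (k : ℕ), (σ ^ k) a = a ↔ N ∣ k)
    (j : ℕ) (hj : ¬ j ≡ 1 [MOD N])
    (δ : Equiv.Perm A) (hδ : δ = σ ^ j) (a₀ : A) :
    ∀ X : List A, 1 ≤ X.length →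
      ¬ IsFactorOf (X ++ twist δ X ++ twist (δ ^ 2) X) (Wfix σ a₀) := by
  subst hδ
  have hne : ∀ x, (σ ^ j) x ≠ σ x := fun x h =>
    hj (Perm.modEq_of_pow_apply_eq (hσ x) (by rwa [pow_one]))
  have hfree : ∀ x, σ x ≠ x := fun x h =>
    hne x (by rw [Perm.pow_apply_eq_self_of_apply_eq_self h, h])
  intro X hX hfac
  obtain ⟨i, hi⟩ := hfac.twistedPeriodOn
  exact not_twistedPeriodOn (Wfix_two_mul σ a₀) (Wfix_two_mul_add_one σ a₀)
    (Commute.self_pow σ j) hfree hne hX i hi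

/-- Theorem 2.1 of the paper: for σ a single N-cycle on A with
    N = |A| ≥ 3 and δ = σ^j, 1 ≤ j < N, j ≢ 1 (mod N), the infinite word
    W = lim ψ^n(a₀) is strongly (3, δ)-free: no factor of W has the form
    X X^(δ) X^(δ²) with X nonempty. -/
theorem strongly_three_delta_free {A : Type*} [Fintype A] (N : ℕ)
    (hN : Fintype.card A = N) (hN3 : 3 ≤ N) (σ : Equiv.Perm A)
    (hσ : ∀ (a : A) (k : ℕ), (σ ^ k) a = a ↔ N ∣ k)
    (j : ℕ) (hj1 : 1 ≤ j) (hjN : j < N) (hj : ¬ j ≡ 1 [MOD N])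
    (δ : Equiv.Perm A) (hδ : δ = σ ^ j) (a₀ : A) :
    ∀ X : List A, 1 ≤ X.length →
      ¬ IsFactorOf (X ++ twist δ X ++ twist (δ ^ 2) X) (Wfix σ a₀) :=
  strongly_three_delta_free_general N σ hσ j hj δ hδ a₀
end
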